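/- arXiv:2107.09267 — 3 statements merged into one kernel-verified Lean document; each statement's English description precedes it below -/
import Mathlib

section
/- Let P and ΔQ be symmetric positive definite real n×n matrices, let Φ_L be any real n×n matrix, and let Ψ : ℝⁿ → ℝⁿ satisfy Ψ(x) = o(‖x‖) as x → 0. Then there exists a constant α > 0 such that for all x ∈ ℝⁿ with xᵀ P x ≤ α, the quantity χ(x) := xᵀ ΔQ x − 2 Ψ(x)ᵀ P Φ_L x − Ψ(x)ᵀ P Ψ(x) is nonnegative. -/
/-!
A positive definite form dominates `c ‖x‖²`, while both correction terms of `χ` are bilinear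
with at least one factor `Ψ x = o(‖x‖)`, hence `o(‖x‖²)`. So `χ ≥ 0` on a ball around the
origin, and small sublevel ellipsoids of a positive definite `P` lie inside that ball.
-/

open Matrix Asymptotics Filter Topology

namespace Matrix

variable {ι : Type*} [Fintype ι]

theorem isBoundedBilinearMap_dotProduct_mulVec (M : Matrix ι ι ℝ) :
    IsBoundedBilinearMap ℝ fun p : (ι → ℝ) × (ι → ℝ) => p.1 ⬝ᵥ (M *ᵥ p.2) := by
  classical
  let B : (ι → ℝ) →L[ℝ] (ι → ℝ) →L[ℝ] ℝ := LinearMap.toContinuousLinearMap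
    ((LinearMap.toContinuousLinearMap : ((ι → ℝ) →ₗ[ℝ] ℝ) ≃ₗ[ℝ] _).toLinearMap ∘ₗ
      toLinearMap₂' ℝ M)
  have hB : (fun p : (ι → ℝ) × (ι → ℝ) => p.1 ⬝ᵥ (M *ᵥ p.2)) = fun p => B p.1 p.2 := by
    ext p
    exact (toLinearMap₂'_apply' M p.1 p.2).symm
  exact hB ▸ B.isBoundedBilinearMap

theorem PosDef.exists_pos_mul_sq_norm_le {M : Matrix ι ι ℝ} (hM : M.PosDef) :
    ∃ c > 0, ∀ x : ι → ℝ, c * ‖x‖ ^ 2 ≤ x ⬝ᵥ (M *ᵥ x) := by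
  have hcont : Continuous fun x : ι → ℝ => x ⬝ᵥ (M *ᵥ x) :=
    (isBoundedBilinearMap_dotProduct_mulVec M).continuous.comp (continuous_id.prodMk continuous_id)
  obtain ⟨c, hc, hsphere⟩ := (isCompact_sphere (0 : ι → ℝ) 1).exists_forall_le'
    hcont.continuousOn fun u hu => hM.dotProduct_mulVec_pos (ne_zero_of_mem_unit_sphere ⟨u, hu⟩)
  refine ⟨c, hc, fun x => ?_⟩
  rcases eq_or_ne x 0 with rfl | hx
  · simp
  have hxpos : 0 < ‖x‖ := norm_pos_iff.2 hx
  have hunit : ‖x‖⁻¹ • x ∈ Metric.sphere (0 : ι → ℝ) 1 := by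
    simp [norm_smul, hxpos.ne']
  have hle := hsphere _ hunit
  rw [mulVec_smul, dotProduct_smul, smul_dotProduct, smul_eq_mul, smul_eq_mul, ← mul_assoc,
    ← sq, inv_pow, le_inv_mul_iff₀ (by positivity)] at hle
  linarith

theorem PosDef.exists_sublevel_subset {M : Matrix ι ι ℝ} (hM : M.PosDef) {s : Set (ι → ℝ)}
    (hs : s ∈ 𝓝 0) : ∃ α > 0, {x | x ⬝ᵥ (M *ᵥ x) ≤ α} ⊆ s := by
  obtain ⟨c, hc, hcoer⟩ := hM.exists_pos_mul_sq_norm_le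
  obtain ⟨δ, hδ, hball⟩ := Metric.mem_nhds_iff.1 hs
  refine ⟨c * (δ / 2) ^ 2, by positivity, fun x hx => hball ?_⟩
  have hsq : ‖x‖ ^ 2 ≤ (δ / 2) ^ 2 := le_of_mul_le_mul_left ((hcoer x).trans hx) hc
  rw [mem_ball_zero_iff]
  nlinarith [norm_nonneg x]

theorem isBigO_dotProduct_mulVec {α : Type*} {l : Filter α} (M : Matrix ι ι ℝ)
    (f g : α → ι → ℝ) :
    (fun a => f a ⬝ᵥ (M *ᵥ g a)) =O[l] fun a => ‖f a‖ * ‖g a‖ :=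
  (isBoundedBilinearMap_dotProduct_mulVec M).isBigO_comp

theorem isLittleO_dotProduct_mulVec {α F : Type*} [SeminormedAddCommGroup F] {l : Filter α}
    (M : Matrix ι ι ℝ) {f g : α → ι → ℝ} {u : α → F} (hf : f =o[l] u) (hg : g =O[l] u) :
    (fun a => f a ⬝ᵥ (M *ᵥ g a)) =o[l] fun a => ‖u a‖ ^ 2 := by
  simpa only [sq] using (isBigO_dotProduct_mulVec M f g).trans_isLittleO
    (hf.norm_norm.mul_isBigO hg.norm_norm)

end Matrix

theorem eventually_nonneg_sub_of_isLittleO {E : Type*} [SeminormedAddCommGroup E]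
    {q r : E → ℝ} {c : ℝ} (hc : 0 < c) (hq : ∀ x, c * ‖x‖ ^ 2 ≤ q x)
    (hr : r =o[𝓝 0] fun x => ‖x‖ ^ 2) : ∀ᶠ x in 𝓝 0, 0 ≤ q x - r x := by
  filter_upwards [hr.def hc] with x hx
  rw [Real.norm_eq_abs, Real.norm_eq_abs, abs_of_nonneg (sq_nonneg ‖x‖)] at hx
  linarith [hq x, le_abs_self (r x)]

/-- If `Ψ = o(‖x‖)` at the origin and `ΔQ` is positive definite, then there is a sublevel
ellipsoid `{x | xᵀ P x ≤ α}` on which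
`χ(x) = xᵀ ΔQ x - 2 Ψ(x)ᵀ P ΦL x - Ψ(x)ᵀ P Ψ(x)` is nonnegative. -/
theorem chi_nonneg_on_small_ellipsoid (n : ℕ)
    (P ΔQ : Matrix (Fin n) (Fin n) ℝ)
    (hP : P.PosDef) (hΔQ : ΔQ.PosDef)
    (ΦL : Matrix (Fin n) (Fin n) ℝ)
    (Ψ : (Fin n → ℝ) → (Fin n → ℝ))
    (hΨ : Ψ =o[nhds 0] fun x => x) :
    ∃ α > (0 : ℝ), ∀ x : Fin n → ℝ, x ⬝ᵥ (P *ᵥ x) ≤ α →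
      0 ≤ x ⬝ᵥ (ΔQ *ᵥ x) - 2 * (Ψ x ⬝ᵥ (P *ᵥ (ΦL *ᵥ x))) - Ψ x ⬝ᵥ (P *ᵥ Ψ x) := by
  obtain ⟨c, hc, hcoer⟩ := hΔQ.exists_pos_mul_sq_norm_le
  have hcross : (fun x => Ψ x ⬝ᵥ (P *ᵥ (ΦL *ᵥ x))) =o[𝓝 0] fun x => ‖x‖ ^ 2 := by
    simpa only [mulVec_mulVec] using isLittleO_dotProduct_mulVec (P * ΦL) hΨ (isBigO_refl _ _)
  have hquad := isLittleO_dotProduct_mulVec P hΨ hΨ.isBigO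
  obtain ⟨α, hα, hsub⟩ := hP.exists_sublevel_subset
    (eventually_nonneg_sub_of_isLittleO hc hcoer ((hcross.const_mul_left 2).add hquad))
  exact ⟨α, hα, fun x hx => by simpa only [Set.mem_ofPred_eq, sub_add_eq_sub_sub] using hsub hx⟩
end

section
/- Let Φ_L be a real n×n matrix, let P, W_x, ΔQ be symmetric positive definite real n×n matrices, let W_u be a symmetric positive definite real n_u×n_u matrix, and let L be a real n_u×n matrix such that Φ_Lᵀ P Φ_L − P = −(W_x + Lᵀ W_u L + ΔQ). Let g : ℝⁿ → ℝⁿ, define Ψ(x) := g(x) − Φ_L x, and let α > 0 be such that for all x in Ω := {x ∈ ℝⁿ : xᵀ P x ≤ α}, one has χ(x) := xᵀ ΔQ x − 2 Ψ(x)ᵀ P Φ_L x − Ψ(x)ᵀ P Ψ(x) ≥ 0. Then Ω is invariant under g (i.e., g(Ω) ⊆ Ω), and for every trajectory x : ℕ → ℝⁿ with x(k+1) = g(x(k)) and x(0) ∈ Ω, the series Σ_{k=0}^{∞} ( x(k)ᵀ W_x x(k) + (L x(k))ᵀ W_u (L x(k)) ) converges with sum at most x(0)ᵀ P x(0). -/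
/-!
With `V x = xᵀ P x`, stage cost `ℓ x = xᵀ W_x x + (L x)ᵀ W_u (L x)` and `g x = Φ_L x + Ψ x`,
expanding `V (g x)` with the symmetric `P` and substituting the Lyapunov equation gives
`V (g x) = V x - ℓ x - χ x`. On `Ω` the correction `χ` is nonnegative, so `V` drops by at least
`ℓ ≥ 0` in each step: the sublevel set `Ω` is invariant, and along a trajectory the partial sums
of `ℓ` telescope to at most `V (x 0) - V (x N) ≤ V (x 0)`.
-/

open Matrix

namespace Matrix

theorem PosSemidef.dotProduct_mulVec_self_nonneg {n : Type*} [Fintype n] {M : Matrix n n ℝ}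
    (hM : M.PosSemidef) (x : n → ℝ) : 0 ≤ x ⬝ᵥ (M *ᵥ x) := by
  simpa using hM.dotProduct_mulVec_nonneg x

variable {R m n : Type*} [CommRing R] [Fintype m] [Fintype n]

theorem dotProduct_transpose_mul_mul_mulVec (A : Matrix m n R) (M : Matrix m m R) (u w : n → R) :
    u ⬝ᵥ ((Aᵀ * M * A) *ᵥ w) = (A *ᵥ u) ⬝ᵥ (M *ᵥ (A *ᵥ w)) := by
  rw [Matrix.mul_assoc, ← mulVec_mulVec, ← mulVec_mulVec, dotProduct_mulVec, vecMul_transpose]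

theorem IsSymm.dotProduct_mulVec_comm {P : Matrix n n R} (hP : P.IsSymm) (u w : n → R) :
    u ⬝ᵥ (P *ᵥ w) = w ⬝ᵥ (P *ᵥ u) := by
  rw [dotProduct_mulVec, ← mulVec_transpose, hP.eq, dotProduct_comm]

theorem IsSymm.add_dotProduct_mulVec_add {P : Matrix n n R} (hP : P.IsSymm) (u w : n → R) :
    (u + w) ⬝ᵥ (P *ᵥ (u + w))
      = u ⬝ᵥ (P *ᵥ u) + 2 * (w ⬝ᵥ (P *ᵥ u)) + w ⬝ᵥ (P *ᵥ w) := by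
  simp only [mulVec_add, add_dotProduct, dotProduct_add, hP.dotProduct_mulVec_comm u w]
  ring

theorem dotProduct_mulVec_add_of_lyapunov {ΦL P Wx ΔQ : Matrix n n R} {Wu : Matrix m m R}
    {L : Matrix m n R} (hP : P.IsSymm) (hLyap : ΦLᵀ * P * ΦL - P = -(Wx + Lᵀ * Wu * L + ΔQ))
    (x ψ : n → R) :
    (ΦL *ᵥ x + ψ) ⬝ᵥ (P *ᵥ (ΦL *ᵥ x + ψ))
      = x ⬝ᵥ (P *ᵥ x) - (x ⬝ᵥ (Wx *ᵥ x) + (L *ᵥ x) ⬝ᵥ (Wu *ᵥ (L *ᵥ x)))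
        - (x ⬝ᵥ (ΔQ *ᵥ x) - 2 * (ψ ⬝ᵥ (P *ᵥ (ΦL *ᵥ x))) - ψ ⬝ᵥ (P *ᵥ ψ)) := by
  have hΦ : ΦLᵀ * P * ΦL = P - (Wx + Lᵀ * Wu * L + ΔQ) := by
    rw [sub_eq_iff_eq_add.mp hLyap]; abel
  have hlinear : (ΦL *ᵥ x) ⬝ᵥ (P *ᵥ (ΦL *ᵥ x))
      = x ⬝ᵥ (P *ᵥ x) - (x ⬝ᵥ (Wx *ᵥ x) + (L *ᵥ x) ⬝ᵥ (Wu *ᵥ (L *ᵥ x))) - x ⬝ᵥ (ΔQ *ᵥ x) := by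
    rw [← dotProduct_transpose_mul_mul_mulVec, hΦ, ← dotProduct_transpose_mul_mul_mulVec]
    simp only [sub_mulVec, add_mulVec, dotProduct_sub, dotProduct_add]
    ring
  rw [hP.add_dotProduct_mulVec_add, hlinear]
  ring

end Matrix

theorem summable_and_tsum_le_of_le_sub_succ {V ℓ : ℕ → ℝ} (hV : ∀ k, 0 ≤ V k) (hℓ : ∀ k, 0 ≤ ℓ k)
    (hdecr : ∀ k, ℓ k ≤ V k - V (k + 1)) : Summable ℓ ∧ ∑' k, ℓ k ≤ V 0 := by
  have hpartial : ∀ N, ∑ k ∈ Finset.range N, ℓ k ≤ V 0 := fun N =>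
    calc ∑ k ∈ Finset.range N, ℓ k ≤ ∑ k ∈ Finset.range N, (V k - V (k + 1)) :=
          Finset.sum_le_sum fun k _ => hdecr k
      _ = V 0 - V N := Finset.sum_range_sub' V N
      _ ≤ V 0 := sub_le_self _ (hV N)
  exact ⟨summable_of_sum_range_le hℓ hpartial, Real.tsum_le_of_sum_range_le hℓ hpartial⟩

theorem terminal_region_invariance_and_cost_bound_general (n nu : ℕ)
    (ΦL P Wx ΔQ : Matrix (Fin n) (Fin n) ℝ)
    (Wu : Matrix (Fin nu) (Fin nu) ℝ)
    (L : Matrix (Fin nu) (Fin n) ℝ)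
    (hP : P.PosDef) (hWx : Wx.PosDef) (hWu : Wu.PosDef)
    (hLyap : ΦLᵀ * P * ΦL - P = -(Wx + Lᵀ * Wu * L + ΔQ))
    (g : (Fin n → ℝ) → (Fin n → ℝ))
    (α : ℝ)
    (Ω : Set (Fin n → ℝ)) (hΩ : Ω = {x : Fin n → ℝ | x ⬝ᵥ (P *ᵥ x) ≤ α})
    (hχ : ∀ x ∈ Ω,
      0 ≤ x ⬝ᵥ (ΔQ *ᵥ x) - 2 * ((g x - ΦL *ᵥ x) ⬝ᵥ (P *ᵥ (ΦL *ᵥ x)))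
          - (g x - ΦL *ᵥ x) ⬝ᵥ (P *ᵥ (g x - ΦL *ᵥ x))) :
    (∀ x ∈ Ω, g x ∈ Ω) ∧
      ∀ x : ℕ → Fin n → ℝ, (∀ k, x (k + 1) = g (x k)) → x 0 ∈ Ω →
        Summable (fun k => (x k) ⬝ᵥ (Wx *ᵥ x k) + (L *ᵥ x k) ⬝ᵥ (Wu *ᵥ (L *ᵥ x k))) ∧
        ∑' k, ((x k) ⬝ᵥ (Wx *ᵥ x k) + (L *ᵥ x k) ⬝ᵥ (Wu *ᵥ (L *ᵥ x k)))
          ≤ (x 0) ⬝ᵥ (P *ᵥ x 0) := by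
  have hcost_nonneg (v : Fin n → ℝ) : 0 ≤ v ⬝ᵥ (Wx *ᵥ v) + (L *ᵥ v) ⬝ᵥ (Wu *ᵥ (L *ᵥ v)) :=
    add_nonneg (hWx.posSemidef.dotProduct_mulVec_self_nonneg v)
      (hWu.posSemidef.dotProduct_mulVec_self_nonneg (L *ᵥ v))
  have hdecr : ∀ v ∈ Ω,
      v ⬝ᵥ (Wx *ᵥ v) + (L *ᵥ v) ⬝ᵥ (Wu *ᵥ (L *ᵥ v)) ≤ v ⬝ᵥ (P *ᵥ v) - g v ⬝ᵥ (P *ᵥ g v) := by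
    intro v hv
    have hstep := dotProduct_mulVec_add_of_lyapunov (isHermitian_iff_isSymm.mp hP.isHermitian)
      hLyap v (g v - ΦL *ᵥ v)
    rw [add_sub_cancel] at hstep
    linarith [hχ v hv]
  have hinv : ∀ v ∈ Ω, g v ∈ Ω := by
    intro v hv
    have hV : g v ⬝ᵥ (P *ᵥ g v) ≤ v ⬝ᵥ (P *ᵥ v) := by linarith [hdecr v hv, hcost_nonneg v]
    rw [hΩ] at hv ⊢
    exact hV.trans hv
  refine ⟨hinv, fun x hx hx0 => ?_⟩
  have hmem (k : ℕ) : x k ∈ Ω := Nat.rec hx0 (fun k ih => hx k ▸ hinv _ ih) k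
  exact summable_and_tsum_le_of_le_sub_succ
    (fun k => hP.posSemidef.dotProduct_mulVec_self_nonneg (x k)) (fun k => hcost_nonneg (x k)) fun k => hx k ▸ hdecr (x k) (hmem k)

/-- If `P` solves the modified Lyapunov equation `ΦLᵀ P ΦL - P = -(Wx + Lᵀ Wu L + ΔQ)` and the
correction term `χ` is nonnegative on the ellipsoid `Ω = {x | xᵀ P x ≤ α}`, then `Ω` is
invariant under the closed-loop map `g`, and along every trajectory starting in `Ω` the
infinite-horizon stage cost converges with sum at most `x(0)ᵀ P x(0)`. -/
theorem terminal_region_invariance_and_cost_bound (n nu : ℕ)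
    (ΦL P Wx ΔQ : Matrix (Fin n) (Fin n) ℝ)
    (Wu : Matrix (Fin nu) (Fin nu) ℝ)
    (L : Matrix (Fin nu) (Fin n) ℝ)
    (hP : P.PosDef) (hWx : Wx.PosDef) (hΔQ : ΔQ.PosDef) (hWu : Wu.PosDef)
    (hLyap : ΦLᵀ * P * ΦL - P = -(Wx + Lᵀ * Wu * L + ΔQ))
    (g : (Fin n → ℝ) → (Fin n → ℝ))
    (α : ℝ) (hα : 0 < α)
    (Ω : Set (Fin n → ℝ)) (hΩ : Ω = {x : Fin n → ℝ | x ⬝ᵥ (P *ᵥ x) ≤ α})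
    (hχ : ∀ x ∈ Ω,
      0 ≤ x ⬝ᵥ (ΔQ *ᵥ x) - 2 * ((g x - ΦL *ᵥ x) ⬝ᵥ (P *ᵥ (ΦL *ᵥ x)))
          - (g x - ΦL *ᵥ x) ⬝ᵥ (P *ᵥ (g x - ΦL *ᵥ x))) :
    (∀ x ∈ Ω, g x ∈ Ω) ∧
      ∀ x : ℕ → Fin n → ℝ, (∀ k, x (k + 1) = g (x k)) → x 0 ∈ Ω →
        Summable (fun k => (x k) ⬝ᵥ (Wx *ᵥ x k) + (L *ᵥ x k) ⬝ᵥ (Wu *ᵥ (L *ᵥ x k))) ∧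
        ∑' k, ((x k) ⬝ᵥ (Wx *ᵥ x k) + (L *ᵥ x k) ⬝ᵥ (Wu *ᵥ (L *ᵥ x k)))
          ≤ (x 0) ⬝ᵥ (P *ᵥ x 0) :=
  terminal_region_invariance_and_cost_bound_general n nu ΦL P Wx ΔQ Wu L hP hWx hWu hLyap g α Ω hΩ
    hχ
end

section
/- Let F : ℝ^{n_x} × ℝ^{n_u} → ℝ^{n_x} be twice continuously differentiable with F(0,0) = 0, let U ⊆ ℝ^{n_u} contain the origin in its interior, let W_x, ΔQ be symmetric positive definite n_x×n_x matrices and W_u a symmetric positive definite n_u×n_u matrix, let L be a real n_u×n_x matrix, set Φ := ∂F/∂x(0,0), Γ := ∂F/∂u(0,0), Φ_L := Φ − Γ L, and suppose P is a symmetric positive definite matrix solving Φ_Lᵀ P Φ_L − P = −(W_x + Lᵀ W_u L + ΔQ). Then there exists α > 0 such that, with Ω := {x ∈ ℝ^{n_x} : xᵀ P x ≤ α}, every trajectory x(k+1) = F(x(k), −L x(k)) with x(0) ∈ Ω satisfies: x(k) ∈ Ω and −L x(k) ∈ U for all k ∈ ℕ, and x(k) → 0 as k → ∞. -/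
/-!
`V x = xᵀ P x` is a local Lyapunov function for the closed loop `x ↦ F (x, -L x)`. By the
Lyapunov equation, `V (Φ_L x) - V x = -xᵀ (W_x + Lᵀ W_u L + ΔQ) x ≤ -δ ‖x‖²`, while the closed
loop differs from `Φ_L x` by `o(‖x‖)`, which changes `V` only by `o(‖x‖²)`. Hence near the origin
`V` contracts by a fixed factor `θ < 1` per step. As `V` is coercive, a small enough sublevel set
`Ω` lies inside that neighbourhood and inside the preimage of `U` under `-L`; so `Ω` is invariant,
the inputs are admissible, and `V (x k) ≤ θ ^ k α` forces `x k → 0`.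
-/

open Matrix Filter Topology

section NormedSpace

variable {E : Type*} [NormedAddCommGroup E]

theorem ContinuousLinearMap.isLittleO_apply_add_self_sub [NormedSpace ℝ E] {α : Type*}
    {l : Filter α} (B : E →L[ℝ] E →L[ℝ] ℝ) {a r f : α → E} (ha : a =O[l] f) (hr : r =o[l] f) :
    (fun t => B (a t + r t) (a t + r t) - B (a t) (a t)) =o[l] fun t => ‖f t‖ ^ 2 := by
  have hB := B.isBoundedBilinearMap
  have hsq : (fun t => ‖f t‖ * ‖f t‖) = fun t => ‖f t‖ ^ 2 := by funext t; ring
  have hcross : (fun t => B (a t) (r t)) =o[l] fun t => ‖f t‖ ^ 2 :=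
    hsq ▸ hB.isBigO_comp.trans_isLittleO (ha.norm_norm.mul_isLittleO hr.norm_norm)
  have hrem : (fun t => B (r t) (a t + r t)) =o[l] fun t => ‖f t‖ ^ 2 :=
    hsq ▸ hB.isBigO_comp.trans_isLittleO
      (hr.norm_norm.mul_isBigO (ha.add hr.isBigO).norm_norm)
  refine (hcross.add hrem).congr_left fun t => ?_
  simp only [map_add, _root_.add_apply]
  ring

theorem ContinuousLinearMap.exists_pos_mul_norm_sq_le [NormedSpace ℝ E]
    [FiniteDimensional ℝ E] (B : E →L[ℝ] E →L[ℝ] ℝ) (hB : ∀ x ≠ 0, 0 < B x x) :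
    ∃ m > 0, ∀ x, m * ‖x‖ ^ 2 ≤ B x x := by
  rcases subsingleton_or_nontrivial E with hE | hE
  · exact ⟨1, one_pos, fun x => by simp [Subsingleton.elim x 0]⟩
  obtain ⟨x₀, hx₀, hmin⟩ := (isCompact_sphere (0 : E) 1).exists_isMinOn
    (NormedSpace.sphere_nonempty.mpr zero_le_one)
    (by fun_prop : Continuous fun x => B x x).continuousOn
  refine ⟨B x₀ x₀, hB x₀ (ne_zero_of_mem_unit_sphere ⟨x₀, hx₀⟩), fun x => ?_⟩
  rcases eq_or_ne x 0 with rfl | hx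
  · simp
  have hu : ‖x‖⁻¹ • x ∈ Metric.sphere (0 : E) 1 := by simp [norm_smul, hx]
  have hscale : B x x = ‖x‖ ^ 2 * B (‖x‖⁻¹ • x) (‖x‖⁻¹ • x) := by
    simp only [map_smul, _root_.smul_apply, smul_eq_mul]
    field_simp
  rw [hscale, mul_comm]
  exact mul_le_mul_of_nonneg_left (hmin hu) (by positivity)

theorem ContinuousLinearMap.exists_eventually_apply_le_mul [NormedSpace ℝ E]
    (B : E →L[ℝ] E →L[ℝ] ℝ) (A : E →L[ℝ] E) {G : E → E} {δ : ℝ} (hδ : 0 < δ)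
    (hdecr : ∀ x, B (A x) (A x) - B x x ≤ -(δ * ‖x‖ ^ 2))
    (hG : (fun x => G x - A x) =o[𝓝 0] fun x => x) :
    ∃ θ, 0 ≤ θ ∧ θ < 1 ∧ ∀ᶠ x in 𝓝 0, B (G x) (G x) ≤ θ * B x x := by
  set M := ‖B‖ + δ
  have hM : 0 < M := by positivity
  have hupper : ∀ x, B x x ≤ M * ‖x‖ ^ 2 := fun x => calc
    B x x ≤ ‖B x x‖ := Real.le_norm_self _
    _ ≤ ‖B‖ * ‖x‖ * ‖x‖ := B.le_opNorm₂ x x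
    _ ≤ M * ‖x‖ ^ 2 := by nlinarith [sq_nonneg ‖x‖]
  have hpert := (B.isLittleO_apply_add_self_sub (A.isBigO_id _) hG).def (half_pos hδ)
  -- Half of the margin `δ ‖x‖²` absorbs the perturbation; since `B x x ≤ M ‖x‖²`, the other
  -- half is at least `δ / (2M) · B x x`.
  refine ⟨1 - δ / (2 * M), ?_, sub_lt_self _ (by positivity), ?_⟩
  · rw [sub_nonneg, div_le_one (by positivity)]
    linarith [norm_nonneg B]
  filter_upwards [hpert] with x hx
  simp only [add_sub_cancel, Real.norm_eq_abs, norm_pow, abs_norm] at hx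
  have hrate : δ / (2 * M) * B x x ≤ δ / 2 * ‖x‖ ^ 2 := calc
    δ / (2 * M) * B x x ≤ δ / (2 * M) * (M * ‖x‖ ^ 2) := by gcongr; exact hupper x
    _ = δ / 2 * ‖x‖ ^ 2 := by field_simp
  linarith [le_of_abs_le hx, hdecr x]

theorem exists_pos_setOf_le_subset {V : E → ℝ} {m : ℝ} (hm : 0 < m)
    (hV : ∀ x, m * ‖x‖ ^ 2 ≤ V x) {S : Set E} (hS : S ∈ 𝓝 0) :
    ∃ α > 0, {x | V x ≤ α} ⊆ S := by
  obtain ⟨ε, hε, hball⟩ := Metric.mem_nhds_iff.mp hS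
  refine ⟨m * (ε / 2) ^ 2, by positivity, fun x hx => hball ?_⟩
  have hsq : ‖x‖ ^ 2 ≤ (ε / 2) ^ 2 := le_of_mul_le_mul_left ((hV x).trans hx) hm
  rw [mem_ball_zero_iff]
  linarith [(pow_le_pow_iff_left₀ (norm_nonneg x) (by positivity) two_ne_zero).mp hsq]

theorem tendsto_nhds_zero_of_mul_norm_sq_le {x : ℕ → E} {m c θ : ℝ} (hm : 0 < m)
    (hθ₀ : 0 ≤ θ) (hθ₁ : θ < 1) (h : ∀ k, m * ‖x k‖ ^ 2 ≤ θ ^ k * c) :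
    Tendsto x atTop (𝓝 0) := by
  have hsq : Tendsto (fun k => ‖x k‖ ^ 2) atTop (𝓝 0) := by
    refine squeeze_zero (fun k => by positivity) (fun k => (le_div_iff₀' hm).2 (h k)) ?_
    simpa using ((tendsto_pow_atTop_nhds_zero_of_lt_one hθ₀ hθ₁).mul_const c).div_const m
  rw [tendsto_zero_iff_norm_tendsto_zero]
  simpa [Function.comp_def, Real.sqrt_sq (norm_nonneg _)] using
    (Real.continuous_sqrt.tendsto 0).comp hsq

end NormedSpace

theorem apply_le_pow_mul_of_contracting {X : Type*} {V : X → ℝ} {g : X → X} {θ α : ℝ}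
    (hθ₀ : 0 ≤ θ) (hθ₁ : θ ≤ 1) (hα : 0 ≤ α) (hg : ∀ y, V y ≤ α → V (g y) ≤ θ * V y)
    {x : ℕ → X} (hx : ∀ k, x (k + 1) = g (x k)) (hx₀ : V (x 0) ≤ α) :
    ∀ k, V (x k) ≤ θ ^ k * α := by
  intro k
  induction k with
  | zero => simpa using hx₀
  | succ k ih =>
    have hk : V (x k) ≤ α := ih.trans (mul_le_of_le_one_left hα (pow_le_one₀ hθ₀ hθ₁))
    calc V (x (k + 1)) ≤ θ * V (x k) := hx k ▸ hg _ hk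
      _ ≤ θ * (θ ^ k * α) := by gcongr
      _ = θ ^ (k + 1) * α := by ring

namespace Matrix

variable {n m : Type*} [Fintype n] [Fintype m]

noncomputable def toContinuousBilin' (P : Matrix n n ℝ) :
    (n → ℝ) →L[ℝ] (n → ℝ) →L[ℝ] ℝ :=
  ((dotProductBilin ℝ ℝ).compl₂ P.mulVecLin).toContinuousBilinearMap

theorem toContinuousBilin'_apply (P : Matrix n n ℝ) (u w : n → ℝ) :
    P.toContinuousBilin' u w = u ⬝ᵥ P *ᵥ w :=
  rfl

theorem dotProduct_mulVec_mulVec_self (A : Matrix m n ℝ) (P : Matrix m m ℝ) (x : n → ℝ) :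
    (A *ᵥ x) ⬝ᵥ P *ᵥ (A *ᵥ x) = x ⬝ᵥ (Aᵀ * P * A) *ᵥ x := by
  rw [Matrix.mul_assoc, ← mulVec_mulVec, ← mulVec_mulVec, dotProduct_mulVec x Aᵀ,
    vecMul_transpose]

theorem PosDef.exists_pos_mul_norm_sq_le {P : Matrix n n ℝ} (hP : P.PosDef) :
    ∃ m > 0, ∀ x : n → ℝ, m * ‖x‖ ^ 2 ≤ x ⬝ᵥ P *ᵥ x :=
  P.toContinuousBilin'.exists_pos_mul_norm_sq_le fun x hx => by
    simpa [toContinuousBilin'_apply] using hP.dotProduct_mulVec_pos hx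

theorem exists_eventually_quadForm_le_mul_of_lyapunov {A P Q : Matrix n n ℝ}
    (hQ : Q.PosDef) (hLyap : Aᵀ * P * A - P = -Q) {G : (n → ℝ) → n → ℝ}
    (hG : (fun x => G x - A *ᵥ x) =o[𝓝 0] fun x => x) :
    ∃ θ, 0 ≤ θ ∧ θ < 1 ∧ ∀ᶠ x in 𝓝 0, G x ⬝ᵥ P *ᵥ G x ≤ θ * (x ⬝ᵥ P *ᵥ x) := by
  obtain ⟨δ, hδ, hQx⟩ := hQ.exists_pos_mul_norm_sq_le
  refine P.toContinuousBilin'.exists_eventually_apply_le_mul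
    (LinearMap.toContinuousLinearMap A.mulVecLin) hδ (fun x => ?_) hG
  have hdiff : (A *ᵥ x) ⬝ᵥ P *ᵥ (A *ᵥ x) - x ⬝ᵥ P *ᵥ x = -(x ⬝ᵥ Q *ᵥ x) := by
    rw [dotProduct_mulVec_mulVec_self, ← dotProduct_sub, ← sub_mulVec, hLyap, neg_mulVec,
      dotProduct_neg]
  simp only [toContinuousBilin'_apply, LinearMap.coe_toContinuousLinearMap',
    mulVecLin_apply]
  linarith [hQx x]

theorem isLittleO_closedLoop_sub_mulVec {F : (n → ℝ) × (m → ℝ) → n → ℝ}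
    {D : (n → ℝ) × (m → ℝ) →L[ℝ] n → ℝ} (hF : HasFDerivAt F D (0, 0))
    (hF₀ : F (0, 0) = 0)
    {Φ : Matrix n n ℝ} {Γ : Matrix n m ℝ} (hD : ∀ p, D p = Φ *ᵥ p.1 + Γ *ᵥ p.2)
    (L : Matrix m n ℝ) :
    (fun h => F (h, -(L *ᵥ h)) - (Φ - Γ * L) *ᵥ h) =o[𝓝 0] fun h => h := by
  let j : (n → ℝ) →L[ℝ] (n → ℝ) × (m → ℝ) :=
    (ContinuousLinearMap.id ℝ _).prod (-LinearMap.toContinuousLinearMap L.mulVecLin)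
  have hj : HasFDerivAt (F ∘ j) (D.comp j) 0 :=
    HasFDerivAt.comp 0 (by rwa [map_zero]) j.hasFDerivAt
  refine (hasFDerivAt_iff_isLittleO_nhds_zero.mp hj).congr_left fun h => ?_
  simp only [zero_add, Function.comp_apply, ContinuousLinearMap.prod_apply,
    ContinuousLinearMap.id_apply, _root_.neg_apply, LinearMap.coe_toContinuousLinearMap',
    mulVecBilin_apply, mulVec_zero, neg_zero, hF₀, sub_zero, ContinuousLinearMap.comp_apply, hD,
    sub_right_inj, j]
  rw [sub_mulVec, ← mulVec_mulVec, mulVec_neg]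
  abel

end Matrix

/-- Dual-mode property of the terminal region: under the hypotheses of Lemma 1, there exists
`α > 0` such that every closed-loop trajectory `x(k+1) = F(x(k), -L x(k))` starting in
`Ω = {x | xᵀ P x ≤ α}` stays in `Ω`, has admissible inputs `-L x(k) ∈ U` at all times, and
converges to the origin. -/
theorem terminal_region_dual_mode (nx nu : ℕ)
    (F : (Fin nx → ℝ) × (Fin nu → ℝ) → (Fin nx → ℝ))
    (hF : ContDiff ℝ 2 F) (hF0 : F (0, 0) = 0)
    (U : Set (Fin nu → ℝ)) (hU : (0 : Fin nu → ℝ) ∈ interior U)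
    (Wx ΔQ : Matrix (Fin nx) (Fin nx) ℝ) (hWx : Wx.PosDef) (hΔQ : ΔQ.PosDef)
    (Wu : Matrix (Fin nu) (Fin nu) ℝ) (hWu : Wu.PosDef)
    (L : Matrix (Fin nu) (Fin nx) ℝ)
    (Φ : Matrix (Fin nx) (Fin nx) ℝ) (Γ : Matrix (Fin nx) (Fin nu) ℝ)
    (hΦΓ : ∀ p : (Fin nx → ℝ) × (Fin nu → ℝ),
      fderiv ℝ F (0, 0) p = Φ *ᵥ p.1 + Γ *ᵥ p.2)
    (P : Matrix (Fin nx) (Fin nx) ℝ) (hP : P.PosDef)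
    (hLyap : (Φ - Γ * L)ᵀ * P * (Φ - Γ * L) - P = -(Wx + Lᵀ * Wu * L + ΔQ)) :
    ∃ α > (0 : ℝ),
      ∀ x : ℕ → Fin nx → ℝ, (∀ k, x (k + 1) = F (x k, -(L *ᵥ x k))) →
        (x 0) ⬝ᵥ (P *ᵥ x 0) ≤ α →
        (∀ k : ℕ, (x k) ⬝ᵥ (P *ᵥ x k) ≤ α ∧ -(L *ᵥ x k) ∈ U) ∧
        Filter.Tendsto x Filter.atTop (nhds 0) := by
  have hQ : (Wx + Lᵀ * Wu * L + ΔQ).PosDef := by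
    refine PosDef.posSemidef_add (hWx.posSemidef.add ?_) hΔQ
    simpa [conjTranspose_eq_transpose_of_trivial] using
      hWu.posSemidef.conjTranspose_mul_mul_same L
  have hlin := isLittleO_closedLoop_sub_mulVec
    (hF.differentiable (by norm_num) (0, 0)).hasFDerivAt hF0 hΦΓ L
  obtain ⟨θ, hθ₀, hθ₁, hcontract⟩ :=
    exists_eventually_quadForm_le_mul_of_lyapunov hQ hLyap hlin
  have hinput : ∀ᶠ y in 𝓝 (0 : Fin nx → ℝ), -(L *ᵥ y) ∈ U := by
    refine (Continuous.tendsto (by fun_prop) 0).eventually ?_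
    simpa using mem_interior_iff_mem_nhds.mp hU
  obtain ⟨m, hm, hPm⟩ := hP.exists_pos_mul_norm_sq_le
  obtain ⟨α, hα, hΩ⟩ := exists_pos_setOf_le_subset hm hPm (hcontract.and hinput)
  refine ⟨α, hα, fun x hx hx₀ => ?_⟩
  have hdecay := apply_le_pow_mul_of_contracting (V := fun y => y ⬝ᵥ P *ᵥ y)
    (g := fun y => F (y, -(L *ᵥ y))) hθ₀ hθ₁.le hα.le (fun y hy => (hΩ hy).1) hx hx₀
  have hmem : ∀ k, x k ⬝ᵥ P *ᵥ x k ≤ α := fun k =>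
    (hdecay k).trans (mul_le_of_le_one_left hα.le (pow_le_one₀ hθ₀ hθ₁.le))
  exact ⟨fun k => ⟨hmem k, (hΩ (hmem k)).2⟩,
    tendsto_nhds_zero_of_mul_norm_sq_le hm hθ₀ hθ₁ fun k => (hPm _).trans (hdecay k)⟩
end
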